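/- The Moser spindle M satisfies m_3(M) = 1/11: every 3-coloring of its 7 vertices produces at least one monochromatic edge (so M is not properly 3-colorable), and some 3-coloring produces exactly one monochromatic edge among its 11 edges. -/

import Mathlib

open MeasureTheory Real

noncomputable section

-- Number of monochromatic edges of `G` under the vertex coloring `χ`.
open Classical in
def monoCount {V : Type} [Fintype V] {k : ℕ} (G : SimpleGraph V) (χ : V → Fin k) : ℕ :=
  (G.edgeFinset.filter fun e => (e.map χ).IsDiag).card

-- `m_k(G)`: the least fraction of monochromatic edges over all `k`-colorings of `G`.
open Classical in
def mval {V : Type} [Fintype V] (k : ℕ) (G : SimpleGraph V) : ℝ :=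
  ⨅ χ : V → Fin k, (monoCount G χ : ℝ) / (G.edgeFinset.card : ℝ)

/-- The edges of the Moser spindle: two rhombi of equilateral triangles sharing the
apex `0`, plus the edge `{3, 6}`. -/
def moserEdges : Finset (Sym2 (Fin 7)) :=
  {s(0,1), s(0,2), s(1,2), s(1,3), s(2,3), s(0,4), s(0,5), s(4,5), s(4,6), s(5,6), s(3,6)}

/-- The Moser spindle graph on the vertex set `{0, …, 6}`. -/
def moser : SimpleGraph (Fin 7) where
  Adj a b := s(a, b) ∈ moserEdges
  symm := ⟨by intro a b h; rwa [Sym2.eq_swap]⟩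
  loopless := ⟨by intro a; fin_cases a <;> decide⟩

instance : DecidableRel moser.Adj :=
  fun a b => inferInstanceAs (Decidable (s(a, b) ∈ moserEdges))

/-! In a proper 3-coloring the two triangles of a rhombus force its two tips to share a color,
so both rhombi give vertices `3` and `6` the color of the apex `0`, and the edge `{3, 6}` is
monochromatic. Conversely, coloring the vertices `0, …, 6` by `0, 1, 2, 0, 1, 2, 0` leaves only
`{3, 6}` monochromatic. -/

lemma monoCount_eq_zero_iff {V : Type} [Fintype V] {k : ℕ} (G : SimpleGraph V)
    (χ : V → Fin k) : monoCount G χ = 0 ↔ ∀ ⦃v w⦄, G.Adj v w → χ v ≠ χ w := by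
  classical
  simp only [monoCount, Finset.card_eq_zero, Finset.filter_eq_empty_iff]
  constructor
  · intro h v w hvw
    simpa using h (G.mem_edgeFinset.mpr (G.mem_edgeSet.mpr hvw))
  · intro h e he
    induction e using Sym2.ind with
    | _ v w => simpa using h (G.mem_edgeFinset.mp he)

lemma one_le_monoCount_of_not_colorable {V : Type} [Fintype V] {k : ℕ} {G : SimpleGraph V}
    (hG : ¬ G.Colorable k) (χ : V → Fin k) : 1 ≤ monoCount G χ :=
  Nat.one_le_iff_ne_zero.mpr fun h =>
    hG ⟨SimpleGraph.Coloring.mk χ fun hvw => (monoCount_eq_zero_iff G χ).mp h hvw⟩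

open Classical in
lemma mval_eq_of_forall_monoCount_le {V : Type} [Fintype V] {k : ℕ} (G : SimpleGraph V)
    (χ₀ : V → Fin k) (hχ₀ : ∀ χ : V → Fin k, monoCount G χ₀ ≤ monoCount G χ) :
    mval k G = monoCount G χ₀ / G.edgeFinset.card := by
  have : Nonempty (V → Fin k) := ⟨χ₀⟩
  refine le_antisymm (ciInf_le (Set.finite_range _).bddBelow χ₀) (le_ciInf fun χ => ?_)
  gcongr
  exact hχ₀ χ

lemma Fin.three_eq_of_rhombus {a b c d : Fin 3} (hab : a ≠ b) (hac : a ≠ c) (hbc : b ≠ c)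
    (hbd : b ≠ d) (hcd : c ≠ d) : d = a := by
  omega

-- Stated for any `Fintype` instance: `monoCount` and `mval` use a classical one.
lemma edgeFinset_moser {_ : Fintype moser.edgeSet} : moser.edgeFinset = moserEdges := by
  ext e
  induction e using Sym2.ind with
  | _ v w => exact SimpleGraph.mem_edgeFinset

lemma card_edgeFinset_moser {_ : Fintype moser.edgeSet} : moser.edgeFinset.card = 11 := by
  rw [edgeFinset_moser]
  rfl

lemma moser_not_colorable : ¬ moser.Colorable 3 := by
  rintro ⟨C⟩
  have h3 : C 3 = C 0 :=
    Fin.three_eq_of_rhombus (b := C 1) (c := C 2) (C.valid (by decide)) (C.valid (by decide))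
      (C.valid (by decide)) (C.valid (by decide)) (C.valid (by decide))
  have h6 : C 6 = C 0 :=
    Fin.three_eq_of_rhombus (b := C 4) (c := C 5) (C.valid (by decide)) (C.valid (by decide))
      (C.valid (by decide)) (C.valid (by decide)) (C.valid (by decide))
  exact C.valid (show moser.Adj 3 6 by decide) (h3.trans h6.symm)

lemma monoCount_moser_mod_three :
    monoCount moser (![0, 1, 2, 0, 1, 2, 0] : Fin 7 → Fin 3) = 1 := by
  rw [monoCount, edgeFinset_moser]
  decide

theorem stmt12 :
    moser.edgeFinset.card = 11 ∧
    (∀ χ : Fin 7 → Fin 3, 1 ≤ monoCount moser χ) ∧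
    (∃ χ : Fin 7 → Fin 3, monoCount moser χ = 1) ∧
    mval 3 moser = 1 / 11 := by
  have h_lower := one_le_monoCount_of_not_colorable moser_not_colorable
  refine ⟨card_edgeFinset_moser, h_lower, ⟨_, monoCount_moser_mod_three⟩, ?_⟩
  rw [mval_eq_of_forall_monoCount_le moser _ fun χ => monoCount_moser_mod_three ▸ h_lower χ,
    monoCount_moser_mod_three, card_edgeFinset_moser]
  norm_num

end
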